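/- Let β ≥ 0, t ≥ 0, and define Ψ_{β,t}(w) = e^{tw} + 1 for w ≤ β and Ψ_{β,t}(w) = 2e^{tβ} - e^{t(2β-w)} + 1 for w > β. Then for all real u, v one has Ψ_{β,t}(u + v) ≤ e^{t|v|} Ψ_{β,t}(u). -/
import Mathlib


noncomputable def Psi (β t w : ℝ) : ℝ :=
  if w ≤ β then Real.exp (t * w) + 1
  else 2 * Real.exp (t * β) - Real.exp (t * (2 * β - w)) + 1

lemma amgm_exp (x y : ℝ) : 2 * Real.exp ((x + y) / 2) ≤ Real.exp x + Real.exp y := by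
  have h := sq_nonneg (Real.exp (x/2) - Real.exp (y/2))
  have e1 : Real.exp (x/2) * Real.exp (x/2) = Real.exp x := by
    rw [← Real.exp_add]; ring_nf
  have e2 : Real.exp (y/2) * Real.exp (y/2) = Real.exp y := by
    rw [← Real.exp_add]; ring_nf
  have e3 : Real.exp (x/2) * Real.exp (y/2) = Real.exp ((x+y)/2) := by
    rw [← Real.exp_add]; ring_nf
  nlinarith

lemma Psi_le_exp (β t w : ℝ) : Psi β t w ≤ Real.exp (t * w) + 1 := by
  unfold Psi
  split
  · exact le_refl _
  · have h := amgm_exp (t * w) (t * (2 * β - w))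
    have : (t * w + t * (2 * β - w)) / 2 = t * β := by ring
    rw [this] at h
    linarith

lemma Psi_pos (β t w : ℝ) (ht : 0 ≤ t) : 0 < Psi β t w := by
  unfold Psi
  split
  · positivity
  · rename_i hw
    push_neg at hw
    have : Real.exp (t * (2 * β - w)) ≤ Real.exp (t * β) :=
      Real.exp_le_exp.2 (by nlinarith)
    linarith [Real.exp_pos (t * β)]

lemma Psi_mono (β t : ℝ) (ht : 0 ≤ t) {w1 w2 : ℝ} (h : w1 ≤ w2) :
    Psi β t w1 ≤ Psi β t w2 := by
  unfold Psi
  split <;> split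
  · have : t * w1 ≤ t * w2 := by nlinarith
    linarith [Real.exp_le_exp.2 this]
  · rename_i h1 h2
    push_neg at h2
    have hb1 : Real.exp (t * w1) ≤ Real.exp (t * β) := by
      exact Real.exp_le_exp.2 (by nlinarith)
    have hb2 : Real.exp (t * (2 * β - w2)) ≤ Real.exp (t * β) := by
      exact Real.exp_le_exp.2 (by nlinarith)
    linarith
  · rename_i h1 h2
    push_neg at h1
    linarith [h1.trans_le (h.trans h2)]
  · rename_i h1 h2
    have : Real.exp (t * (2 * β - w2)) ≤ Real.exp (t * (2 * β - w1)) := by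
      exact Real.exp_le_exp.2 (by nlinarith)
    linarith

lemma Psi_shift_nonneg (β t : ℝ) (ht : 0 ≤ t) (u s : ℝ) (hs : 0 ≤ s) :
    Psi β t (u + s) ≤ Real.exp (t * s) * Psi β t u := by
  have hes : 1 ≤ Real.exp (t * s) := Real.one_le_exp (by positivity)
  by_cases hu : u ≤ β
  · -- Psi(u+s) ≤ e^{t(u+s)} + 1 = e^{ts} e^{tu} + 1 ≤ e^{ts}(e^{tu}+1)
    have h1 := Psi_le_exp β t (u + s)
    have h2 : Real.exp (t * (u + s)) = Real.exp (t * s) * Real.exp (t * u) := by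
      rw [← Real.exp_add]; ring_nf
    have h3 : Psi β t u = Real.exp (t * u) + 1 := by unfold Psi; rw [if_pos hu]
    rw [h3]
    have := Real.exp_pos (t * u)
    nlinarith
  · push_neg at hu
    have hus : ¬ u + s ≤ β := by push_neg; linarith
    have h1 : Psi β t (u + s)
        = 2 * Real.exp (t * β) - Real.exp (t * (2 * β - (u + s))) + 1 := by
      unfold Psi; rw [if_neg hus]
    have h2 : Psi β t u
        = 2 * Real.exp (t * β) - Real.exp (t * (2 * β - u)) + 1 := by
      unfold Psi; rw [if_neg (not_le.2 hu)]
    rw [h1, h2]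
    have key : Real.exp (t * (2 * β - u)) - Real.exp (t * (2 * β - (u + s)))
        ≤ (Real.exp (t * s) - 1) * (2 * Real.exp (t * β) - Real.exp (t * (2 * β - u)) + 1) := by
      have e1 : Real.exp (t * (2 * β - u))
          = Real.exp (t * s) * Real.exp (t * (2 * β - (u + s))) := by
        rw [← Real.exp_add]; ring_nf
      have hlow : Real.exp (t * (2 * β - (u + s))) ≤ Real.exp (t * β) :=
        Real.exp_le_exp.2 (by nlinarith)
      have hmid : Real.exp (t * (2 * β - u)) ≤ Real.exp (t * β) :=
        Real.exp_le_exp.2 (by nlinarith)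
      nlinarith [Real.exp_pos (t * (2 * β - (u + s)))]
    nlinarith

theorem Psi_shift_bound (β t : ℝ) (hβ : 0 ≤ β) (ht : 0 ≤ t) (u v : ℝ) :
    Psi β t (u + v) ≤ Real.exp (t * |v|) * Psi β t u := by
  rcases le_or_gt 0 v with hv | hv
  · rw [abs_of_nonneg hv]
    exact Psi_shift_nonneg β t ht u v hv
  · rw [abs_of_neg hv]
    have hmono : Psi β t (u + v) ≤ Psi β t u := Psi_mono β t ht (by linarith)
    have he : 1 ≤ Real.exp (t * -v) := Real.one_le_exp (by nlinarith)
    nlinarith [Psi_pos β t u ht, Psi_pos β t (u + v) ht]
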